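/- If every nonzero element of L*(A) = {h ∈ ℤ^n : A·h = 0, h ≠ 0} that is ⊑-minimal has ℓ1-norm at most M, and z ∈ L*(A) with z_ĉ = 1 for some coordinate ĉ, then there exists w ∈ L*(A) with w_ĉ = 1, ‖w‖_1 ≤ M, and w ⊑ z (w sign-compatible with z and |w_c| ≤ |z_c| coordinatewise). -/
import Mathlib

def SignCompat {n : ℕ} (a b : Fin n → ℤ) : Prop := ∀ i, 0 ≤ a i * b i

def Conforms {n : ℕ} (a b : Fin n → ℤ) : Prop :=
  SignCompat a b ∧ ∀ i, |a i| ≤ |b i|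

lemma conforms_refl {n : ℕ} (a : Fin n → ℤ) : Conforms a a :=
  ⟨fun i => mul_self_nonneg _, fun i => le_refl _⟩

lemma conforms_trans {n : ℕ} {a b c : Fin n → ℤ}
    (h1 : Conforms a b) (h2 : Conforms b c) : Conforms a c := by
  constructor
  · intro i
    have s1 := h1.1 i; have s2 := h2.1 i
    have l1 := h1.2 i
    rcases lt_trichotomy (b i) 0 with hb | hb | hb
    · have ha : a i ≤ 0 := by nlinarith
      have hc : c i ≤ 0 := by nlinarith
      exact mul_nonneg_iff.mpr (Or.inr ⟨ha, hc⟩)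
    · have : a i = 0 := by
        have : |a i| ≤ 0 := by simpa [hb] using l1
        simpa using this.antisymm (abs_nonneg _) |>.symm ▸ (abs_eq_zero.mp (le_antisymm this (abs_nonneg _)))
      simp [this]
    · have ha : 0 ≤ a i := by nlinarith
      have hc : 0 ≤ c i := by nlinarith
      exact mul_nonneg ha hc
  · exact fun i => le_trans (h1.2 i) (h2.2 i)

lemma conforms_sum_lt {n : ℕ} {h z : Fin n → ℤ} (hc : Conforms h z) (hne : h ≠ z) :
    ∑ i : Fin n, |h i| < ∑ i : Fin n, |z i| := by
  obtain ⟨i, hi⟩ : ∃ i, h i ≠ z i := by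
    by_contra hx; push_neg at hx; exact hne (funext hx)
  refine Finset.sum_lt_sum (fun j _ => hc.2 j) ⟨i, Finset.mem_univ i, ?_⟩
  have s := hc.1 i; have l := hc.2 i
  rcases mul_nonneg_iff.mp s with ⟨h1, h2⟩ | ⟨h1, h2⟩
  · rw [abs_of_nonneg h1, abs_of_nonneg h2] at l ⊢; omega
  · rw [abs_of_nonpos h1, abs_of_nonpos h2] at l ⊢; omega

lemma conforms_sub {n : ℕ} {h z : Fin n → ℤ} (hc : Conforms h z) : Conforms (z - h) z := by
  constructor <;> intro i <;>
  · have s := hc.1 i; have l := hc.2 i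
    simp only [Pi.sub_apply]
    rcases mul_nonneg_iff.mp s with ⟨h1, h2⟩ | ⟨h1, h2⟩
    · rw [abs_of_nonneg h1, abs_of_nonneg h2] at l
      first
      | nlinarith
      | (rw [abs_of_nonneg (by omega : (0:ℤ) ≤ z i - h i), abs_of_nonneg h2]; omega)
    · rw [abs_of_nonpos h1, abs_of_nonpos h2] at l
      first
      | nlinarith
      | (rw [abs_of_nonpos (by omega : z i - h i ≤ 0), abs_of_nonpos h2]; omega)

lemma aux_18 (m n : ℕ) (A : Matrix (Fin m) (Fin n) ℤ) (M : ℤ)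
    (hmin : ∀ h : Fin n → ℤ, h ≠ 0 → A.mulVec h = 0 →
      (∀ h' : Fin n → ℤ, h' ≠ 0 → A.mulVec h' = 0 → Conforms h' h → h' = h) →
      ∑ i : Fin n, |h i| ≤ M)
    (chat : Fin n) :
    ∀ N : ℕ, ∀ z : Fin n → ℤ, (∑ i : Fin n, |z i|).natAbs ≤ N →
      z ≠ 0 → A.mulVec z = 0 → z chat = 1 →
    ∃ w : Fin n → ℤ, w ≠ 0 ∧ A.mulVec w = 0 ∧ w chat = 1 ∧
      (∑ i : Fin n, |w i| ≤ M) ∧ Conforms w z := by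
  intro N
  induction N with
  | zero =>
    intro z hN hz0 hzker hzchat
    exfalso
    have h1 : (1:ℤ) ≤ ∑ i : Fin n, |z i| := by
      have := Finset.single_le_sum (f := fun i => |z i|) (fun i _ => abs_nonneg _)
        (Finset.mem_univ chat)
      simp [hzchat] at this; omega
    omega
  | succ N ih =>
    intro z hN hz0 hzker hzchat
    by_cases hm : ∀ h' : Fin n → ℤ, h' ≠ 0 → A.mulVec h' = 0 → Conforms h' z → h' = z
    · exact ⟨z, hz0, hzker, hzchat, hmin z hz0 hzker hm, conforms_refl z⟩
    · push_neg at hm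
      obtain ⟨h, hne0, hker, hconf, hnez⟩ := hm
      have hlt := conforms_sum_lt hconf hnez
      have hnn : (0:ℤ) ≤ ∑ i : Fin n, |h i| := Finset.sum_nonneg fun i _ => abs_nonneg _
      -- h chat is 0 or 1
      have hs := hconf.1 chat
      have hl := hconf.2 chat
      rw [hzchat] at hs hl
      simp at hs hl
      have hcases : h chat = 0 ∨ h chat = 1 := by
        rw [abs_of_nonneg hs] at hl; omega
      rcases hcases with hc0 | hc1
      · -- use z - h
        have hN' : (∑ i : Fin n, |(z - h) i|).natAbs ≤ N := by
          have hlt2 := conforms_sum_lt (conforms_sub hconf)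
            (by simpa [sub_eq_self] using hne0)
          have hnn2 : (0:ℤ) ≤ ∑ i : Fin n, |(z - h) i| :=
            Finset.sum_nonneg fun i _ => abs_nonneg _
          have hsum1 : (1:ℤ) ≤ ∑ i : Fin n, |h i| := by
            obtain ⟨j, hj⟩ : ∃ j, h j ≠ 0 := by
              by_contra hx; push_neg at hx; exact hne0 (funext hx)
            have hj1 : (0:ℤ) < |h j| := abs_pos.mpr hj
            have h2 : |h j| ≤ ∑ i : Fin n, |h i| := by
              simpa using Finset.single_le_sum (f := fun i => |h i|)
                (fun i _ => abs_nonneg _) (Finset.mem_univ j)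
            omega
          have key : ∑ i : Fin n, |(z - h) i| ≤ (∑ i : Fin n, |z i|) - 1 := by
            have : ∀ i, |(z - h) i| ≤ |z i| := (conforms_sub hconf).2
            have hle : ∑ i : Fin n, |(z - h) i| + ∑ i : Fin n, |h i| ≤ ∑ i : Fin n, |z i| := by
              rw [← Finset.sum_add_distrib]
              apply Finset.sum_le_sum
              intro i _
              simp only [Pi.sub_apply]
              have := hconf.1 i; have l := hconf.2 i
              rcases mul_nonneg_iff.mp this with ⟨h1, h2⟩ | ⟨h1, h2⟩
              · rw [abs_of_nonneg h1, abs_of_nonneg h2] at l ⊢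
                rw [abs_of_nonneg (by omega : (0:ℤ) ≤ z i - h i)]; omega
              · rw [abs_of_nonpos h1, abs_of_nonpos h2] at l ⊢
                rw [abs_of_nonpos (by omega : z i - h i ≤ 0)]; omega
            omega
          omega
        have hzh0 : (z - h) ≠ 0 := by
          intro hx
          have : (z - h) chat = 0 := by rw [hx]; rfl
          simp [Pi.sub_apply, hzchat, hc0] at this
        have hzhker : A.mulVec (z - h) = 0 := by
          rw [Matrix.mulVec_sub, hzker, hker, sub_zero]
        have hzhchat : (z - h) chat = 1 := by simp [Pi.sub_apply, hzchat, hc0]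
        obtain ⟨w, w0, wker, wchat, wsum, wconf⟩ := ih (z - h) hN' hzh0 hzhker hzhchat
        exact ⟨w, w0, wker, wchat, wsum, conforms_trans wconf (conforms_sub hconf)⟩
      · -- use h
        have hN' : (∑ i : Fin n, |h i|).natAbs ≤ N := by omega
        obtain ⟨w, w0, wker, wchat, wsum, wconf⟩ := ih h hN' hne0 hker hc1
        exact ⟨w, w0, wker, wchat, wsum, conforms_trans wconf hconf⟩

theorem stmt_18 (m n : ℕ) (A : Matrix (Fin m) (Fin n) ℤ) (M : ℤ)
    (hmin : ∀ h : Fin n → ℤ, h ≠ 0 → A.mulVec h = 0 →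
      (∀ h' : Fin n → ℤ, h' ≠ 0 → A.mulVec h' = 0 → Conforms h' h → h' = h) →
      ∑ i : Fin n, |h i| ≤ M)
    (z : Fin n → ℤ) (hz0 : z ≠ 0) (hzker : A.mulVec z = 0)
    (chat : Fin n) (hzchat : z chat = 1) :
    ∃ w : Fin n → ℤ, w ≠ 0 ∧ A.mulVec w = 0 ∧ w chat = 1 ∧
      (∑ i : Fin n, |w i| ≤ M) ∧ Conforms w z := by
  exact aux_18 m n A M hmin chat (∑ i : Fin n, |z i|).natAbs z le_rfl hz0 hzker hzchat
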